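/- arXiv:1101.1218 — 3 statements merged into one kernel-verified Lean document; each statement's English description precedes it below -/
import Mathlib

section
/- For smooth u, v on a bounded Lipschitz domain T ⊂ ℝ², the identity ∫_T (2 ∂₁₂u ∂₁₂v − ∂₁₁u ∂₂₂v − ∂₂₂u ∂₁₁v) dx = ∫_{∂T} (−(∂²u/∂s²)(∂v/∂n) + (∂²u/∂n∂s)(∂v/∂s)) ds holds, where n is the outward unit normal and s the unit tangent along ∂T. Equivalently, ∫_T D²u : D²v = ∫_T Δu Δv + ∫_{∂T}(−(∂²u/∂s²)(∂v/∂n) + (∂²u/∂n∂s)(∂v/∂s)) ds. -/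
open MeasureTheory intervalIntegral

noncomputable def pdx (f : ℝ × ℝ → ℝ) (p : ℝ × ℝ) : ℝ := fderiv ℝ f p (1, 0)
noncomputable def pdy (f : ℝ × ℝ → ℝ) (p : ℝ × ℝ) : ℝ := fderiv ℝ f p (0, 1)

lemma contDiff_pdx {f : ℝ × ℝ → ℝ} (hf : ContDiff ℝ (⊤ : ℕ∞) f) : ContDiff ℝ (⊤ : ℕ∞) (pdx f) :=
  (hf.fderiv_right (by simp)).clm_apply contDiff_const
lemma contDiff_pdy {f : ℝ × ℝ → ℝ} (hf : ContDiff ℝ (⊤ : ℕ∞) f) : ContDiff ℝ (⊤ : ℕ∞) (pdy f) :=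
  (hf.fderiv_right (by simp)).clm_apply contDiff_const

lemma pdx_pdy_comm {f : ℝ × ℝ → ℝ} (hf : ContDiff ℝ (⊤ : ℕ∞) f) : pdx (pdy f) = pdy (pdx f) := by
  funext p
  have hdf : Differentiable ℝ f := hf.differentiable (by simp)
  have h2 : DifferentiableAt ℝ (fderiv ℝ f) p :=
    ((hf.fderiv_right (m := (⊤ : ℕ∞)) (by simp)).differentiable (by simp)) p
  have hsymm := second_derivative_symmetric (f' := fderiv ℝ f)
      (f'' := fderiv ℝ (fderiv ℝ f) p) (fun y => (hdf y).hasFDerivAt) h2.hasFDerivAt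
  unfold pdx pdy
  rw [fderiv_clm_apply h2 (differentiableAt_const _),
      fderiv_clm_apply h2 (differentiableAt_const _)]
  simp [hsymm ((1:ℝ),(0:ℝ)) ((0:ℝ),(1:ℝ))]

lemma pdx_mul_sub_mul {A B C D : ℝ × ℝ → ℝ} (hA : ContDiff ℝ (⊤ : ℕ∞) A) (hB : ContDiff ℝ (⊤ : ℕ∞) B)
    (hC : ContDiff ℝ (⊤ : ℕ∞) C) (hD : ContDiff ℝ (⊤ : ℕ∞) D) (p : ℝ × ℝ) :
    pdx (fun q => A q * B q - C q * D q) p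
      = (pdx A p * B p + A p * pdx B p) - (pdx C p * D p + C p * pdx D p) := by
  unfold pdx
  rw [fderiv_fun_sub (f := fun q => A q * B q) (g := fun q => C q * D q) (((hA.differentiable (by simp)) p).mul ((hB.differentiable (by simp)) p))
      (((hC.differentiable (by simp)) p).mul ((hD.differentiable (by simp)) p)),
    fderiv_fun_mul ((hA.differentiable (by simp)) p) ((hB.differentiable (by simp)) p),
    fderiv_fun_mul ((hC.differentiable (by simp)) p) ((hD.differentiable (by simp)) p)]
  simp; ring

lemma pdy_mul_sub_mul {A B C D : ℝ × ℝ → ℝ} (hA : ContDiff ℝ (⊤ : ℕ∞) A) (hB : ContDiff ℝ (⊤ : ℕ∞) B)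
    (hC : ContDiff ℝ (⊤ : ℕ∞) C) (hD : ContDiff ℝ (⊤ : ℕ∞) D) (p : ℝ × ℝ) :
    pdy (fun q => A q * B q - C q * D q) p
      = (pdy A p * B p + A p * pdy B p) - (pdy C p * D p + C p * pdy D p) := by
  unfold pdy
  rw [fderiv_fun_sub (f := fun q => A q * B q) (g := fun q => C q * D q) (((hA.differentiable (by simp)) p).mul ((hB.differentiable (by simp)) p))
      (((hC.differentiable (by simp)) p).mul ((hD.differentiable (by simp)) p)),
    fderiv_fun_mul ((hA.differentiable (by simp)) p) ((hB.differentiable (by simp)) p),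
    fderiv_fun_mul ((hC.differentiable (by simp)) p) ((hD.differentiable (by simp)) p)]
  simp; ring

lemma integral_pdy_line {f : ℝ × ℝ → ℝ} (hf : ContDiff ℝ (⊤ : ℕ∞) f) (x c d : ℝ) :
    ∫ y in c..d, pdy f (x, y) = f (x, d) - f (x, c) := by
  apply intervalIntegral.integral_eq_sub_of_hasDerivAt
  · intro y _
    have h := ((hf.differentiable (by simp)) (x, y)).hasFDerivAt.comp_hasDerivAt y
      ((hasDerivAt_const y x).prodMk (hasDerivAt_id y))
    simpa [pdy, Function.comp_def] using h
  · exact ((contDiff_pdy hf).continuous.comp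
      (continuous_const.prodMk continuous_id)).intervalIntegrable c d

lemma integral_pdx_line {f : ℝ × ℝ → ℝ} (hf : ContDiff ℝ (⊤ : ℕ∞) f) (y a b : ℝ) :
    ∫ x in a..b, pdx f (x, y) = f (b, y) - f (a, y) := by
  apply intervalIntegral.integral_eq_sub_of_hasDerivAt
  · intro x _
    have h := ((hf.differentiable (by simp)) (x, y)).hasFDerivAt.comp_hasDerivAt x
      ((hasDerivAt_id x).prodMk (hasDerivAt_const x y))
    simpa [pdx, Function.comp_def] using h
  · exact ((contDiff_pdx hf).continuous.comp
      (continuous_id.prodMk continuous_const)).intervalIntegrable a b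

lemma swap_double_integral {f : ℝ × ℝ → ℝ} (hf : Continuous f) {a b c d : ℝ}
    (hab : a ≤ b) (hcd : c ≤ d) :
    ∫ x in a..b, ∫ y in c..d, f (x, y) = ∫ y in c..d, ∫ x in a..b, f (x, y) := by
  rw [intervalIntegral.integral_of_le hab, intervalIntegral.integral_of_le hcd]
  simp_rw [intervalIntegral.integral_of_le hcd, intervalIntegral.integral_of_le hab]
  rw [MeasureTheory.integral_integral_swap]
  have : IntegrableOn (fun z : ℝ × ℝ => f z) (Set.Ioc a b ×ˢ Set.Ioc c d) volume := by
    apply (hf.continuousOn.integrableOn_compact (isCompact_Icc.prod isCompact_Icc)).mono_set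
      (Set.prod_mono Set.Ioc_subset_Icc_self Set.Ioc_subset_Icc_self)
  simpa [IntegrableOn, Function.uncurry_def, Measure.prod_restrict, ← Measure.volume_eq_prod] using this

lemma green_rect {P Q : ℝ × ℝ → ℝ} (hP : ContDiff ℝ (⊤ : ℕ∞) P) (hQ : ContDiff ℝ (⊤ : ℕ∞) Q)
    {a b c d : ℝ} (hab : a ≤ b) (hcd : c ≤ d) :
    ∫ x in a..b, ∫ y in c..d, (pdx P (x, y) + pdy Q (x, y))
      = (∫ y in c..d, (P (b, y) - P (a, y))) + ∫ x in a..b, (Q (x, d) - Q (x, c)) := by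
  have cP : Continuous (pdx P) := (contDiff_pdx hP).continuous
  have cQ : Continuous (pdy Q) := (contDiff_pdy hQ).continuous
  have step1 : ∀ x : ℝ, ∫ y in c..d, (pdx P (x, y) + pdy Q (x, y))
      = (∫ y in c..d, pdx P (x, y)) + (Q (x, d) - Q (x, c)) := by
    intro x
    rw [intervalIntegral.integral_add
      (Continuous.intervalIntegrable (by fun_prop) c d)
      (Continuous.intervalIntegrable (by fun_prop) c d),
      integral_pdy_line hQ]
  simp_rw [step1]
  rw [intervalIntegral.integral_add ?_ ?_]
  · congr 1
    rw [swap_double_integral cP hab hcd]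
    exact intervalIntegral.integral_congr (fun y _ => integral_pdx_line hP y a b)
  · exact (continuous_parametric_intervalIntegral_of_continuous'
      (f := fun x y => pdx P (x, y)) (by exact cP) c d).intervalIntegrable a b
  · have : Continuous Q := hQ.continuous
    exact Continuous.intervalIntegrable (by fun_prop) a b

lemma double_integral_add {f g : ℝ × ℝ → ℝ} (hf : Continuous f) (hg : Continuous g)
    (a b c d : ℝ) :
    ∫ x in a..b, ∫ y in c..d, (f (x, y) + g (x, y))
      = (∫ x in a..b, ∫ y in c..d, f (x, y)) + ∫ x in a..b, ∫ y in c..d, g (x, y) := by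
  have step1 : ∀ x : ℝ, ∫ y in c..d, (f (x, y) + g (x, y))
      = (∫ y in c..d, f (x, y)) + ∫ y in c..d, g (x, y) := fun x =>
    intervalIntegral.integral_add
      (Continuous.intervalIntegrable (by fun_prop) c d)
      (Continuous.intervalIntegrable (by fun_prop) c d)
  simp_rw [step1]
  exact intervalIntegral.integral_add
    ((continuous_parametric_intervalIntegral_of_continuous'
      (f := fun x y => f (x, y)) (by exact hf) c d).intervalIntegrable a b)
    ((continuous_parametric_intervalIntegral_of_continuous'
      (f := fun x y => g (x, y)) (by exact hg) c d).intervalIntegrable a b)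

/-- Integration by parts for Hessians on the rectangle `T = [a,b] × [c,d]`:
`∫_T (2 ∂₁₂u ∂₁₂v − ∂₁₁u ∂₂₂v − ∂₂₂u ∂₁₁v)
  = ∫_{∂T} (−(∂²u/∂s²)(∂v/∂n) + (∂²u/∂n∂s)(∂v/∂s)) ds`,
and equivalently `∫_T D²u : D²v = ∫_T Δu Δv + ∫_{∂T} (…) ds`, where on each
edge `n` is the outward unit normal and `s` the unit tangent (the boundary
integrand being independent of the orientation of `s`). -/
theorem hessian_integration_by_parts_rectangle
    (a b c d : ℝ) (hab : a < b) (hcd : c < d)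
    (u v : ℝ × ℝ → ℝ) (hu : ContDiff ℝ (⊤ : ℕ∞) u) (hv : ContDiff ℝ (⊤ : ℕ∞) v) :
    ((∫ x in a..b, ∫ y in c..d,
        (2 * pdx (pdy u) (x, y) * pdx (pdy v) (x, y)
          - pdx (pdx u) (x, y) * pdy (pdy v) (x, y)
          - pdy (pdy u) (x, y) * pdx (pdx v) (x, y)))
      = (∫ y in c..d,
            ((-pdy (pdy u) (b, y) * pdx v (b, y) + pdx (pdy u) (b, y) * pdy v (b, y))
             + (pdy (pdy u) (a, y) * pdx v (a, y) - pdx (pdy u) (a, y) * pdy v (a, y))))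
        + (∫ x in a..b,
            ((-pdx (pdx u) (x, d) * pdy v (x, d) + pdx (pdy u) (x, d) * pdx v (x, d))
             + (pdx (pdx u) (x, c) * pdy v (x, c) - pdx (pdy u) (x, c) * pdx v (x, c))))) ∧
    ((∫ x in a..b, ∫ y in c..d,
        (pdx (pdx u) (x, y) * pdx (pdx v) (x, y) + pdx (pdy u) (x, y) * pdx (pdy v) (x, y)
          + pdy (pdx u) (x, y) * pdy (pdx v) (x, y) + pdy (pdy u) (x, y) * pdy (pdy v) (x, y)))
      = (∫ x in a..b, ∫ y in c..d,
          (pdx (pdx u) (x, y) + pdy (pdy u) (x, y)) * (pdx (pdx v) (x, y) + pdy (pdy v) (x, y)))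
        + ((∫ y in c..d,
            ((-pdy (pdy u) (b, y) * pdx v (b, y) + pdx (pdy u) (b, y) * pdy v (b, y))
             + (pdy (pdy u) (a, y) * pdx v (a, y) - pdx (pdy u) (a, y) * pdy v (a, y))))
          + (∫ x in a..b,
            ((-pdx (pdx u) (x, d) * pdy v (x, d) + pdx (pdy u) (x, d) * pdx v (x, d))
             + (pdx (pdx u) (x, c) * pdy v (x, c) - pdx (pdy u) (x, c) * pdx v (x, c)))))) := by
  have huy := contDiff_pdy hu
  have hux := contDiff_pdx hu
  have huxy := contDiff_pdx huy
  have huxx := contDiff_pdx hux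
  have huyy := contDiff_pdy huy
  have hvx := contDiff_pdx hv
  have hvy := contDiff_pdy hv
  set P : ℝ × ℝ → ℝ := fun q => pdx (pdy u) q * pdy v q - pdy (pdy u) q * pdx v q with hPdef
  set Q : ℝ × ℝ → ℝ := fun q => pdx (pdy u) q * pdx v q - pdx (pdx u) q * pdy v q with hQdef
  have hP : ContDiff ℝ (⊤ : ℕ∞) P := (huxy.mul hvy).sub (huyy.mul hvx)
  have hQ : ContDiff ℝ (⊤ : ℕ∞) Q := (huxy.mul hvx).sub (huxx.mul hvy)
  have key : ∀ p : ℝ × ℝ,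
      2 * pdx (pdy u) p * pdx (pdy v) p - pdx (pdx u) p * pdy (pdy v) p
        - pdy (pdy u) p * pdx (pdx v) p
      = pdx P p + pdy Q p := by
    intro p
    rw [show pdx P p = _ from pdx_mul_sub_mul huxy hvy huyy hvx p,
        show pdy Q p = _ from pdy_mul_sub_mul huxy hvx huxx hvy p,
        show pdy (pdx v) = pdx (pdy v) from (pdx_pdy_comm hv).symm,
        show pdy (pdx (pdy u)) = pdx (pdy (pdy u)) from (pdx_pdy_comm huy).symm,
        show pdy (pdx (pdx u)) = pdx (pdx (pdy u)) from by
          rw [← pdx_pdy_comm hux, ← pdx_pdy_comm hu]]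
    ring
  have part1 : (∫ x in a..b, ∫ y in c..d,
        (2 * pdx (pdy u) (x, y) * pdx (pdy v) (x, y)
          - pdx (pdx u) (x, y) * pdy (pdy v) (x, y)
          - pdy (pdy u) (x, y) * pdx (pdx v) (x, y)))
      = (∫ y in c..d,
            ((-pdy (pdy u) (b, y) * pdx v (b, y) + pdx (pdy u) (b, y) * pdy v (b, y))
             + (pdy (pdy u) (a, y) * pdx v (a, y) - pdx (pdy u) (a, y) * pdy v (a, y))))
        + (∫ x in a..b,
            ((-pdx (pdx u) (x, d) * pdy v (x, d) + pdx (pdy u) (x, d) * pdx v (x, d))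
             + (pdx (pdx u) (x, c) * pdy v (x, c) - pdx (pdy u) (x, c) * pdx v (x, c)))) := by
    calc (∫ x in a..b, ∫ y in c..d,
        (2 * pdx (pdy u) (x, y) * pdx (pdy v) (x, y)
          - pdx (pdx u) (x, y) * pdy (pdy v) (x, y)
          - pdy (pdy u) (x, y) * pdx (pdx v) (x, y)))
        = ∫ x in a..b, ∫ y in c..d, (pdx P (x, y) + pdy Q (x, y)) := by
          simp_rw [key]
      _ = (∫ y in c..d, (P (b, y) - P (a, y))) + ∫ x in a..b, (Q (x, d) - Q (x, c)) :=
          green_rect hP hQ hab.le hcd.le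
      _ = _ := by
          congr 1
          · apply intervalIntegral.integral_congr
            intro y _
            simp only [hPdef]
            ring
          · apply intervalIntegral.integral_congr
            intro x _
            simp only [hQdef]
            ring
  refine ⟨part1, ?_⟩
  rw [← pdx_pdy_comm hu, ← pdx_pdy_comm hv]
  have key2 : ∀ x y : ℝ,
      pdx (pdx u) (x, y) * pdx (pdx v) (x, y) + pdx (pdy u) (x, y) * pdx (pdy v) (x, y)
        + pdx (pdy u) (x, y) * pdx (pdy v) (x, y) + pdy (pdy u) (x, y) * pdy (pdy v) (x, y)
      = ((pdx (pdx u) (x, y) + pdy (pdy u) (x, y)) * (pdx (pdx v) (x, y) + pdy (pdy v) (x, y)))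
        + (2 * pdx (pdy u) (x, y) * pdx (pdy v) (x, y)
            - pdx (pdx u) (x, y) * pdy (pdy v) (x, y)
            - pdy (pdy u) (x, y) * pdx (pdx v) (x, y)) := by
    intro x y; ring
  have cuxx := huxx.continuous
  have cuxy := huxy.continuous
  have cuyy := huyy.continuous
  have cvxx := (contDiff_pdx hvx).continuous
  have cvxy := (contDiff_pdx hvy).continuous
  have cvyy := (contDiff_pdy hvy).continuous
  calc (∫ x in a..b, ∫ y in c..d,
      (pdx (pdx u) (x, y) * pdx (pdx v) (x, y) + pdx (pdy u) (x, y) * pdx (pdy v) (x, y)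
        + pdx (pdy u) (x, y) * pdx (pdy v) (x, y) + pdy (pdy u) (x, y) * pdy (pdy v) (x, y)))
      = ∫ x in a..b, ∫ y in c..d,
        (((pdx (pdx u) (x, y) + pdy (pdy u) (x, y))
            * (pdx (pdx v) (x, y) + pdy (pdy v) (x, y)))
          + (2 * pdx (pdy u) (x, y) * pdx (pdy v) (x, y)
              - pdx (pdx u) (x, y) * pdy (pdy v) (x, y)
              - pdy (pdy u) (x, y) * pdx (pdx v) (x, y))) := by
        simp_rw [key2]
    _ = (∫ x in a..b, ∫ y in c..d,
          (pdx (pdx u) (x, y) + pdy (pdy u) (x, y)) * (pdx (pdx v) (x, y) + pdy (pdy v) (x, y)))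
        + (∫ x in a..b, ∫ y in c..d,
          (2 * pdx (pdy u) (x, y) * pdx (pdy v) (x, y)
            - pdx (pdx u) (x, y) * pdy (pdy v) (x, y)
            - pdy (pdy u) (x, y) * pdx (pdx v) (x, y))) :=
        double_integral_add
          (f := fun p => (pdx (pdx u) p + pdy (pdy u) p) * (pdx (pdx v) p + pdy (pdy v) p))
          (g := fun p => 2 * pdx (pdy u) p * pdx (pdy v) p
            - pdx (pdx u) p * pdy (pdy v) p - pdy (pdy u) p * pdx (pdx v) p)
          (by fun_prop) (by fun_prop) a b c d
    _ = _ := by rw [part1]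
end

section
/- Let P_T = P₂ + span{ξ³, η³} be the shape function space of the rectangular Morley element on the reference square T̂ = [−1,1]² with vertices a₁=(−1,−1), a₂=(1,−1), a₃=(1,1), a₄=(−1,1) and edges e₁={ξ=1}, e₂={ξ=−1}, e₃={η=1}, e₄={η=−1}. Then the eight functionals v ↦ v(a_i), i=1..4, and v ↦ (1/|e_i|)∫_{e_i} ∂v/∂n ds, i=1..4, form a basis of the dual of P_T; i.e., any v ∈ P_T with all eight degrees of freedom zero is identically zero. -/
/-!
The normal derivative of `v ∈ P_T` on an edge is affine in the tangential variable, and the only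
non-constant term, coming from `ξη`, has mean zero over the edge. So the four edge means give
`c₃ = c₅ = 0`, `c₁ = -3c₆` and `c₂ = -3c₇`. What remains of `v` at the vertices `(±1, ±1)` is
`c₀ + c₄ξη + (c₁ξ + c₆ξ³) + (c₂η + c₇η³)`, whose four values determine `c₀`, `c₄`, `c₁ + c₆`
and `c₂ + c₇`; these vanish, and with the edge relations every coefficient does.
-/

open MeasureTheory intervalIntegral

/-- A generic element of the shape function space
`P_T = P₂ + span{ξ³, η³}` of the rectangular Morley element. -/
noncomputable def morleyShape (c : Fin 8 → ℝ) (ξ η : ℝ) : ℝ :=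
  c 0 + c 1 * ξ + c 2 * η + c 3 * ξ^2 + c 4 * (ξ * η) + c 5 * η^2 +
    c 6 * ξ^3 + c 7 * η^3

theorem integral_affine_symm (a b r : ℝ) : ∫ t in -r..r, (a + b * t) = 2 * r * a := by
  rw [integral_add intervalIntegrable_const ((continuous_const_mul b).intervalIntegrable _ _),
    intervalIntegral.integral_const, intervalIntegral.integral_const_mul, integral_id]
  simp only [smul_eq_mul, neg_sq, sub_self, zero_div, mul_zero, add_zero]
  ring

section
variable (c : Fin 8 → ℝ)

theorem morleyShape_swap (ξ η : ℝ) :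
    morleyShape c ξ η = morleyShape (c ∘ ![0, 2, 1, 5, 4, 3, 7, 6]) η ξ := by
  simp only [morleyShape, Function.comp_apply, Matrix.cons_val]
  ring

theorem hasDerivAt_morleyShape_fst (η x : ℝ) :
    HasDerivAt (fun ξ => morleyShape c ξ η)
      (c 1 + 2 * c 3 * x + c 4 * η + 3 * c 6 * x ^ 2) x := by
  have hcubic : (fun ξ => morleyShape c ξ η) = fun ξ =>
      (c 0 + c 2 * η + c 5 * η ^ 2 + c 7 * η ^ 3) + (c 1 + c 4 * η) * ξ + c 3 * ξ ^ 2 +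
        c 6 * ξ ^ 3 := by
    funext ξ; simp only [morleyShape]; ring
  rw [hcubic]
  refine ((((hasDerivAt_id x).const_mul _).const_add _).add
    ((hasDerivAt_pow 2 x).const_mul _)).add ((hasDerivAt_pow 3 x).const_mul _) |>.congr_deriv ?_
  push_cast; ring

theorem integral_deriv_morleyShape_fst (x : ℝ) :
    ∫ η in (-1 : ℝ)..1, deriv (fun ξ => morleyShape c ξ η) x =
      2 * (c 1 + 2 * c 3 * x + 3 * c 6 * x ^ 2) := by
  simp only [(hasDerivAt_morleyShape_fst c _ x).deriv]
  convert integral_affine_symm (c 1 + 2 * c 3 * x + 3 * c 6 * x ^ 2) (c 4) 1 using 3 with η <;> ring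

theorem integral_deriv_morleyShape_snd (x : ℝ) :
    ∫ ξ in (-1 : ℝ)..1, deriv (fun η => morleyShape c ξ η) x =
      2 * (c 2 + 2 * c 5 * x + 3 * c 7 * x ^ 2) := by
  simp only [morleyShape_swap c]
  exact integral_deriv_morleyShape_fst _ x

end

/-- Unisolvence of the rectangular Morley element on `T̂ = [-1,1]²`: if all four
vertex values and all four edge mean normal derivatives of `v ∈ P_T` vanish,
then `v ≡ 0`.  (Hence the eight degrees of freedom form a basis of `P_T'`.) -/
theorem rectangular_morley_unisolvent (c : Fin 8 → ℝ)
    (hv1 : morleyShape c (-1) (-1) = 0) (hv2 : morleyShape c 1 (-1) = 0)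
    (hv3 : morleyShape c 1 1 = 0) (hv4 : morleyShape c (-1) 1 = 0)
    -- edge e₁ = {ξ = 1}, outward normal derivative ∂/∂ξ
    (he1 : (1/2) * ∫ η in (-1:ℝ)..1, deriv (fun ξ => morleyShape c ξ η) 1 = 0)
    -- edge e₂ = {ξ = -1}, outward normal derivative -∂/∂ξ
    (he2 : (1/2) * ∫ η in (-1:ℝ)..1, -deriv (fun ξ => morleyShape c ξ η) (-1) = 0)
    -- edge e₃ = {η = 1}, outward normal derivative ∂/∂η
    (he3 : (1/2) * ∫ ξ in (-1:ℝ)..1, deriv (fun η => morleyShape c ξ η) 1 = 0)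
    -- edge e₄ = {η = -1}, outward normal derivative -∂/∂η
    (he4 : (1/2) * ∫ ξ in (-1:ℝ)..1, -deriv (fun η => morleyShape c ξ η) (-1) = 0) :
    ∀ ξ η : ℝ, morleyShape c ξ η = 0 := by
  rw [integral_deriv_morleyShape_fst] at he1
  rw [intervalIntegral.integral_neg, integral_deriv_morleyShape_fst] at he2
  rw [integral_deriv_morleyShape_snd] at he3
  rw [intervalIntegral.integral_neg, integral_deriv_morleyShape_snd] at he4
  simp only [morleyShape] at hv1 hv2 hv3 hv4
  norm_num at hv1 hv2 hv3 hv4 he1 he2 he3 he4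
  have hc : c = 0 := by
    ext i
    fin_cases i <;> simp <;> linarith
  simp [hc, morleyShape]
end

section
/- Let Q_T = Q₂ + span{φ₁, φ₂, φ₃} on T̂ = [−1,1]², where Q₂ is the space of biquadratic polynomials, φ₁(ξ,η) = ξ⁴(1−η²), φ₂(ξ,η) = η³(1−ξ²), φ₃(ξ,η) = (ξ+η)(1−ξ²)(1−η²). Then the twelve functionals v ↦ v(a_i) (vertices a_i), v ↦ v(m_i) (edge midpoints m_i), and v ↦ ∫_{e_i} ∂v/∂n ds (edges e_i), i = 1,…,4, are unisolvent on Q_T: any v ∈ Q_T with all twelve values zero vanishes identically. -/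
/-!
The twelve functionals are linear in the coefficients `c`, and the edge fluxes are explicit:
`F x = ∫₋₁¹ ∂_ξ v(x, η) dη` and `G y = ∫₋₁¹ ∂_η v(ξ, y) dξ` are cubics, obtained by integrating
the partial derivatives term by term, and the edge functionals are `F 1`, `G 1`, `-F (-1)`,
`-G (-1)`. The resulting system splits by parity: the vertex and midpoint values give
`c₁ = c₄ = c₇ = 0` and `c₆ = c₁₀ = -c₂`; then `F 1 + F (-1) = 0` forces `c₁₁ = 0` and
`G 1 + G (-1) = 0` forces `c₂ = 0`; what remains is a nonsingular `5 × 5` system in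
`c₀, c₃, c₅, c₈, c₉`.
-/

open MeasureTheory intervalIntegral

/-- A generic element of the shape function space
`Q_T = Q₂ + span{φ₁, φ₂, φ₃}` of the extended high order rectangular Morley
element, where `φ₁ = ξ⁴(1-η²)`, `φ₂ = η³(1-ξ²)`, `φ₃ = (ξ+η)(1-ξ²)(1-η²)`. -/
noncomputable def extShape (c : Fin 12 → ℝ) (ξ η : ℝ) : ℝ :=
  c 0 + c 1 * ξ + c 2 * η + c 3 * ξ^2 + c 4 * (ξ*η) + c 5 * η^2 +
    c 6 * (ξ^2*η) + c 7 * (ξ*η^2) + c 8 * (ξ^2*η^2) +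
    c 9 * (ξ^4 * (1 - η^2)) + c 10 * (η^3 * (1 - ξ^2)) +
    c 11 * ((ξ + η) * (1 - ξ^2) * (1 - η^2))

lemma hasDerivAt_quartic (a₀ a₁ a₂ a₃ a₄ x : ℝ) :
    HasDerivAt (fun t => a₀ + a₁ * t + a₂ * t ^ 2 + a₃ * t ^ 3 + a₄ * t ^ 4)
      (a₁ + 2 * a₂ * x + 3 * a₃ * x ^ 2 + 4 * a₄ * x ^ 3) x := by
  refine (((((hasDerivAt_const x a₀).add ((hasDerivAt_id x).const_mul a₁)).add
    ((hasDerivAt_pow 2 x).const_mul a₂)).add ((hasDerivAt_pow 3 x).const_mul a₃)).add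
    ((hasDerivAt_pow 4 x).const_mul a₄)).congr_deriv ?_
  norm_num
  ring

lemma integral_quartic (a₀ a₁ a₂ a₃ a₄ : ℝ) :
    ∫ t in (-1:ℝ)..1, (a₀ + a₁ * t + a₂ * t ^ 2 + a₃ * t ^ 3 + a₄ * t ^ 4) =
      2 * a₀ + 2 * a₂ / 3 + 2 * a₄ / 5 := by
  simp (disch := (apply Continuous.intervalIntegrable; fun_prop)) only
    [intervalIntegral.integral_add, intervalIntegral.integral_const_mul, integral_pow,
      intervalIntegral.integral_const]
  rw [intervalIntegral.integral_const_mul, integral_id]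
  norm_num
  ring

lemma deriv_extShape_fst (c : Fin 12 → ℝ) (x η : ℝ) :
    deriv (fun ξ => extShape c ξ η) x =
      c 1 + 2 * c 3 * x + c 4 * η + 2 * c 6 * x * η + c 7 * η ^ 2 + 2 * c 8 * x * η ^ 2 +
        4 * c 9 * x ^ 3 * (1 - η ^ 2) - 2 * c 10 * x * η ^ 3 +
        c 11 * (1 - η ^ 2) * (1 - 3 * x ^ 2 - 2 * x * η) := by
  have h := hasDerivAt_quartic (c 0 + c 2 * η + c 5 * η ^ 2 + c 10 * η ^ 3 + c 11 * η * (1 - η ^ 2))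
    (c 1 + c 4 * η + c 7 * η ^ 2 + c 11 * (1 - η ^ 2))
    (c 3 + c 6 * η + c 8 * η ^ 2 - c 10 * η ^ 3 - c 11 * η * (1 - η ^ 2))
    (-c 11 * (1 - η ^ 2)) (c 9 * (1 - η ^ 2)) x
  rw [(h.congr_of_eventuallyEq (.of_forall fun ξ => by unfold extShape; ring)).deriv]
  ring

lemma deriv_extShape_snd (c : Fin 12 → ℝ) (ξ y : ℝ) :
    deriv (fun η => extShape c ξ η) y =
      c 2 + c 4 * ξ + 2 * c 5 * y + c 6 * ξ ^ 2 + 2 * c 7 * ξ * y + 2 * c 8 * ξ ^ 2 * y -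
        2 * c 9 * ξ ^ 4 * y + 3 * c 10 * y ^ 2 * (1 - ξ ^ 2) +
        c 11 * (1 - ξ ^ 2) * (1 - 3 * y ^ 2 - 2 * ξ * y) := by
  have h := hasDerivAt_quartic (c 0 + c 1 * ξ + c 3 * ξ ^ 2 + c 9 * ξ ^ 4 + c 11 * ξ * (1 - ξ ^ 2))
    (c 2 + c 4 * ξ + c 6 * ξ ^ 2 + c 11 * (1 - ξ ^ 2))
    (c 5 + c 7 * ξ + c 8 * ξ ^ 2 - c 9 * ξ ^ 4 - c 11 * ξ * (1 - ξ ^ 2))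
    ((c 10 - c 11) * (1 - ξ ^ 2)) 0 y
  rw [(h.congr_of_eventuallyEq (.of_forall fun η => by unfold extShape; ring)).deriv]
  ring

lemma integral_deriv_extShape_fst (c : Fin 12 → ℝ) (x : ℝ) :
    ∫ η in (-1:ℝ)..1, deriv (fun ξ => extShape c ξ η) x =
      2 * c 1 + 4 * c 3 * x + 2 / 3 * c 7 + 4 / 3 * c 8 * x + 16 / 3 * c 9 * x ^ 3 +
        4 / 3 * c 11 * (1 - 3 * x ^ 2) := by
  have h (η : ℝ) : deriv (fun ξ => extShape c ξ η) x =
      (c 1 + 2 * c 3 * x + 4 * c 9 * x ^ 3 + c 11 * (1 - 3 * x ^ 2)) +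
        (c 4 + 2 * c 6 * x - 2 * c 11 * x) * η +
        (c 7 + 2 * c 8 * x - 4 * c 9 * x ^ 3 - c 11 * (1 - 3 * x ^ 2)) * η ^ 2 +
        2 * (c 11 - c 10) * x * η ^ 3 + 0 * η ^ 4 := by
    rw [deriv_extShape_fst]; ring
  simp_rw [h, integral_quartic]
  ring

lemma integral_deriv_extShape_snd (c : Fin 12 → ℝ) (y : ℝ) :
    ∫ ξ in (-1:ℝ)..1, deriv (fun η => extShape c ξ η) y =
      2 * c 2 + 4 * c 5 * y + 2 / 3 * c 6 + 4 / 3 * c 8 * y - 4 / 5 * c 9 * y + 4 * c 10 * y ^ 2 +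
        4 / 3 * c 11 * (1 - 3 * y ^ 2) := by
  have h (ξ : ℝ) : deriv (fun η => extShape c ξ η) y =
      (c 2 + 2 * c 5 * y + 3 * c 10 * y ^ 2 + c 11 * (1 - 3 * y ^ 2)) +
        (c 4 + 2 * c 7 * y - 2 * c 11 * y) * ξ +
        (c 6 + 2 * c 8 * y - 3 * c 10 * y ^ 2 - c 11 * (1 - 3 * y ^ 2)) * ξ ^ 2 +
        2 * c 11 * y * ξ ^ 3 + (-2 * c 9 * y) * ξ ^ 4 := by
    rw [deriv_extShape_snd]; ring
  simp_rw [h, integral_quartic]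
  ring

/-- Unisolvence of the extended high order rectangular Morley element on
`T̂ = [-1,1]²`: if the four vertex values, the four edge midpoint values, and
the four edge integrals of the outward normal derivative of `v ∈ Q_T` all
vanish, then `v ≡ 0`. -/
theorem extended_morley_unisolvent (c : Fin 12 → ℝ)
    (hv1 : extShape c (-1) (-1) = 0) (hv2 : extShape c 1 (-1) = 0)
    (hv3 : extShape c 1 1 = 0) (hv4 : extShape c (-1) 1 = 0)
    (hm1 : extShape c 1 0 = 0) (hm2 : extShape c 0 1 = 0)
    (hm3 : extShape c (-1) 0 = 0) (hm4 : extShape c 0 (-1) = 0)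
    -- edge e₁ = {ξ = 1}, outward normal derivative ∂/∂ξ
    (he1 : (∫ η in (-1:ℝ)..1, deriv (fun ξ => extShape c ξ η) 1) = 0)
    -- edge e₂ = {η = 1}, outward normal derivative ∂/∂η
    (he2 : (∫ ξ in (-1:ℝ)..1, deriv (fun η => extShape c ξ η) 1) = 0)
    -- edge e₃ = {ξ = -1}, outward normal derivative -∂/∂ξ
    (he3 : (∫ η in (-1:ℝ)..1, -deriv (fun ξ => extShape c ξ η) (-1)) = 0)
    -- edge e₄ = {η = -1}, outward normal derivative -∂/∂η
    (he4 : (∫ ξ in (-1:ℝ)..1, -deriv (fun η => extShape c ξ η) (-1)) = 0) :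
    ∀ ξ η : ℝ, extShape c ξ η = 0 := by
  rw [integral_deriv_extShape_fst] at he1
  rw [integral_deriv_extShape_snd] at he2
  rw [intervalIntegral.integral_neg, integral_deriv_extShape_fst] at he3
  rw [intervalIntegral.integral_neg, integral_deriv_extShape_snd] at he4
  norm_num [extShape] at hv1 hv2 hv3 hv4 hm1 hm2 hm3 hm4 he3 he4
  have hc : c = 0 := by
    funext i
    fin_cases i <;> simp <;> linarith
  intro ξ η
  simp [extShape, hc]
end
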